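/- Expand e^{ρ_{n−1}} ∏_{i=1}^n (1 − e^{−ε_1−ε_i}) = Σ_{A ⊆ {1,…,n}} (−1)^{|A|} e^{λ_A}, where ρ_{n−1} = −Σ_{i=1}^{n−1} i ε_{i+1} and λ_A = ρ_{n−1} − Σ_{i∈A}(ε_1 + ε_i). Then: (a) if n is odd, λ_A is regular (has pairwise distinct coordinates) only for A = ∅ and A = {1,…,n}; (b) if n is even, there are exactly four regular λ_A, corresponding to A = ∅, A = {1,…,n}, A = {n/2+1, …, n}, and A' = {1} ∪ {n/2+2, …, n}, and the latter two differ by a transposition of two coordinates, so their signed contributions to Σ_{w} sgn(w) e^{w(·)} cancel. -/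

import Mathlib

/-!
The coordinates of `-λ_A` are `d_A j = j + [j = 0]·|A| + [j ∈ A]` (indices from `0`).
For `j ≠ 0` they take the value `j` or `j + 1`, and two neighbours `j, j + 1 ≠ 0` collide exactly
when `j ∈ A` and `j + 1 ∉ A`; so a regular `λ_A` forces `A ∖ {0} = {m, …, n - 1}` for some
`1 ≤ m ≤ n`. The nonzero coordinates then fill `{1, …, n} ∖ {m}`, and `d_A 0 = n - m + 2·[0 ∈ A]`
must avoid them: it is `0`, `m` or larger than `n`. This leaves `A = ∅`, `A = univ`, and, only
for even `n`, `m = n/2` with `0 ∉ A` or `m = n/2 + 1` with `0 ∈ A`. These last two weights differ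
by the transposition of coordinates `0` and `n/2`, which changes the sign of the alternant.
-/

open Finset

theorem AddMonoidAlgebra.single_mul_prod_one_sub_single {k G ι : Type*} [CommRing k]
    [AddCommGroup G] [DecidableEq ι] (ρ : G) (v : ι → G) (s : Finset ι) :
    single ρ (1 : k) * ∏ i ∈ s, (1 - single (-v i) 1) =
      ∑ t ∈ s.powerset, (-1 : k) ^ #t • single (ρ - ∑ i ∈ t, v i) 1 := by
  rw [prod_sub, mul_sum]
  refine sum_congr rfl fun t _ => ?_
  rw [prod_const_one, mul_one, prod_single, prod_const_one, mul_left_comm, single_mul_single,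
    sum_neg_distrib, ← sub_eq_add_neg, mul_one]
  rcases Nat.even_or_odd #t with h | h <;> simp [h.neg_one_pow]

theorem Pi.sub_sum_single_add_single_apply {ι R : Type*} [DecidableEq ι] [AddCommGroupWithOne R]
    (ρ : ι → R) (z : ι) (A : Finset ι) (j : ι) :
    (ρ - ∑ i ∈ A, (Pi.single z 1 + Pi.single i 1)) j =
      ρ j - (if j = z then (#A : R) else 0) - (if j ∈ A then 1 else 0) := by
  simp [Pi.single_apply, sum_add_distrib, sub_sub]

theorem Fin.card_filter_le_val (n m : ℕ) : #{i : Fin n | m ≤ (i : ℕ)} = n - m := by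
  have h := card_filter_add_card_filter_not (s := univ) (p := fun i : Fin n => (i : ℕ) < m)
  simp only [not_lt, card_univ, Fintype.card_fin, Fin.card_filter_val_lt] at h
  omega

theorem Fin.exists_threshold_of_succ_mem {n : ℕ} [NeZero n] {A : Finset (Fin n)}
    (hA : ∀ i j : Fin n, i ≠ 0 → (j : ℕ) = i + 1 → i ∈ A → j ∈ A) :
    ∃ m, 1 ≤ m ∧ m ≤ n ∧ ∀ i : Fin n, i ≠ 0 → (i ∈ A ↔ m ≤ i) := by
  have hP : ∃ k, k = n ∨ ∃ i ∈ A, i ≠ 0 ∧ (i : ℕ) = k := ⟨n, Or.inl rfl⟩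
  have hm1 : 1 ≤ Nat.find hP := by
    rcases Nat.find_spec hP with h | ⟨i, -, hi, h⟩
    · have := NeZero.ne n
      omega
    · rwa [← h, Nat.one_le_iff_ne_zero, Fin.val_ne_zero_iff]
  refine ⟨Nat.find hP, hm1, Nat.find_min' hP (Or.inl rfl),
    fun i hi => ⟨fun hiA => Nat.find_min' hP (Or.inr ⟨i, hiA, hi, rfl⟩), fun hmi => ?_⟩⟩
  obtain ⟨i₀, hi₀A, -, hi₀m⟩ : ∃ i ∈ A, i ≠ 0 ∧ (i : ℕ) = Nat.find hP :=
    (Nat.find_spec hP).resolve_left (by omega)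
  have hup : ∀ k, Nat.find hP ≤ k → ∀ hk : k < n, ⟨k, hk⟩ ∈ A := by
    intro k hk
    induction k, hk using Nat.le_induction with
    | base => exact fun _ => by simpa [← hi₀m] using hi₀A
    | succ k hmk ih =>
      refine fun hk => hA _ _ ?_ rfl (ih (by omega))
      rw [← Fin.val_ne_zero_iff]
      exact Nat.one_le_iff_ne_zero.mp (hm1.trans hmk)
  exact hup i hmi i.isLt

namespace ThickRegular

variable {n : ℕ} [NeZero n]

/-- The coordinates `d_A` of `-λ_A`. -/
def negLambda (A : Finset (Fin n)) (j : Fin n) : ℕ :=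
  j + (if j = 0 then #A else 0) + (if j ∈ A then 1 else 0)

variable {A : Finset (Fin n)} {m : ℕ}

theorem card_eq_of_threshold (hA : ∀ i : Fin n, i ≠ 0 → (i ∈ A ↔ m ≤ i)) (hm : 1 ≤ m) :
    #A = n - m + if 0 ∈ A then 1 else 0 := by
  have herase : A.erase 0 = ({i : Fin n | m ≤ (i : ℕ)} : Finset (Fin n)) := by
    ext i
    by_cases hi : i = 0
    · simp [hi]; omega
    · simp [hi, hA i hi]
  split_ifs with h0
  · rw [← card_erase_add_one h0, herase, Fin.card_filter_le_val]
  · rw [← erase_eq_of_notMem h0, herase, Fin.card_filter_le_val, add_zero]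

theorem negLambda_zero_of_threshold (hA : ∀ i : Fin n, i ≠ 0 → (i ∈ A ↔ m ≤ i)) (hm : 1 ≤ m) :
    negLambda A 0 = if 0 ∈ A then n - m + 2 else n - m := by
  simp only [negLambda, card_eq_of_threshold hA hm, Fin.val_zero, if_true]
  split_ifs <;> omega

theorem negLambda_of_threshold (hA : ∀ i : Fin n, i ≠ 0 → (i ∈ A ↔ m ≤ i)) {i : Fin n}
    (hi : i ≠ 0) : negLambda A i = i + if m ≤ i then 1 else 0 := by
  simp [negLambda, hi, hA i hi]

theorem exists_negLambda_eq_negLambda_zero (hA : ∀ i : Fin n, i ≠ 0 → (i ∈ A ↔ m ≤ i))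
    (hm : 1 ≤ m) (hmn : m ≤ n) (h0 : negLambda A 0 ≠ 0) (hm0 : negLambda A 0 ≠ m)
    (hn0 : negLambda A 0 ≤ n) :
    ∃ i ≠ 0, negLambda A i = negLambda A 0 := by
  have hne : ∀ k (hk : k < n), k ≠ 0 → (⟨k, hk⟩ : Fin n) ≠ 0 := fun k hk hk0 h =>
    hk0 (congrArg Fin.val h)
  -- the value is taken at index `negLambda A 0` below the threshold, at its predecessor above it
  rcases lt_or_gt_of_ne hm0 with hlt | hgt
  · refine ⟨_, hne (negLambda A 0) (by omega) h0, ?_⟩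
    rw [negLambda_of_threshold hA (hne _ _ h0)]
    simp only [if_neg (by omega : ¬m ≤ negLambda A 0), add_zero]
  · refine ⟨_, hne (negLambda A 0 - 1) (by omega) (by omega), ?_⟩
    rw [negLambda_of_threshold hA (hne _ _ (by omega))]
    simp only [if_pos (by omega : m ≤ negLambda A 0 - 1)]
    omega

theorem negLambda_injective_of_threshold (hA : ∀ i : Fin n, i ≠ 0 → (i ∈ A ↔ m ≤ i))
    (h0 : negLambda A 0 = 0 ∨ negLambda A 0 = m ∨ n < negLambda A 0) :
    Function.Injective (negLambda A) := by
  have hpos : ∀ i : Fin n, i ≠ 0 → 1 ≤ (i : ℕ) := fun i hi =>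
    Nat.one_le_iff_ne_zero.mpr (Fin.val_ne_zero_iff.mpr hi)
  intro x y hxy
  rcases eq_or_ne x 0 with rfl | hx <;> rcases eq_or_ne y 0 with rfl | hy
  · rfl
  · rw [negLambda_of_threshold hA hy] at hxy
    have := hpos y hy
    have := y.isLt
    split_ifs at hxy <;> omega
  · rw [negLambda_of_threshold hA hx] at hxy
    have := hpos x hx
    have := x.isLt
    split_ifs at hxy <;> omega
  · rw [negLambda_of_threshold hA hx, negLambda_of_threshold hA hy] at hxy
    ext
    split_ifs at hxy <;> omega

theorem negLambda_injective_iff_of_threshold (hA : ∀ i : Fin n, i ≠ 0 → (i ∈ A ↔ m ≤ i))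
    (hm : 1 ≤ m) (hmn : m ≤ n) :
    Function.Injective (negLambda A) ↔
      if 0 ∈ A then m = 1 ∨ 2 * m = n + 2 else m = n ∨ 2 * m = n := by
  have hd := negLambda_zero_of_threshold hA hm
  constructor
  · intro hinj
    by_contra h
    obtain ⟨i, hi, hieq⟩ := exists_negLambda_eq_negLambda_zero hA hm hmn
      (by split_ifs at h hd <;> omega) (by split_ifs at h hd <;> omega)
      (by split_ifs at h hd <;> omega)
    exact hi (hinj hieq)
  · intro h
    exact negLambda_injective_of_threshold hA (by split_ifs at h hd <;> omega)

theorem succ_mem_of_negLambda_injective (hinj : Function.Injective (negLambda A))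
    (i j : Fin n) (hi : i ≠ 0) (hj : (j : ℕ) = i + 1) (hiA : i ∈ A) : j ∈ A := by
  by_contra hjA
  have hj0 : j ≠ 0 := by rw [← Fin.val_ne_zero_iff]; omega
  have : negLambda A i = negLambda A j := by simp [negLambda, hi, hj0, hiA, hjA, hj]
  exact absurd (congrArg Fin.val (hinj this)) (by omega)

theorem negLambda_injective_iff (A : Finset (Fin n)) :
    Function.Injective (negLambda A) ↔
      A = ∅ ∨ A = univ ∨ Even n ∧
        (A = univ.filter (fun i : Fin n => n / 2 ≤ i.val) ∨
          A = univ.filter (fun i : Fin n => i.val = 0 ∨ n / 2 + 1 ≤ i.val)) := by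
  have hn := NeZero.ne n
  have hval : ∀ i : Fin n, i ≠ 0 → (i : ℕ) ≠ 0 := fun i => Fin.val_ne_zero_iff.mpr
  constructor
  · intro hinj
    obtain ⟨m, hm, hmn, hA⟩ :=
      Fin.exists_threshold_of_succ_mem fun i j => succ_mem_of_negLambda_injective hinj i j
    have h0 := (negLambda_injective_iff_of_threshold hA hm hmn).mp hinj
    have hmem : ∀ i : Fin n, i ∈ A ↔ (i : ℕ) = 0 ∧ 0 ∈ A ∨ (i : ℕ) ≠ 0 ∧ m ≤ i := fun i => by
      rcases eq_or_ne i 0 with rfl | hi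
      · simp
      · simp [hA i hi, hval i hi]
    by_cases hz : 0 ∈ A <;> simp only [hz, if_true, if_false] at h0
    · rcases h0 with h0 | h0
      · refine Or.inr (Or.inl ?_)
        ext i
        rw [hmem i]
        simp only [hz, mem_univ, and_true, iff_true]
        omega
      · refine Or.inr (Or.inr ⟨Nat.even_iff.mpr (by omega), Or.inr ?_⟩)
        ext i
        rw [hmem i]
        simp only [hz, mem_filter, mem_univ, true_and, and_true]
        omega
    · rcases h0 with h0 | h0
      · refine Or.inl ?_
        ext i
        rw [hmem i]
        simp only [hz, notMem_empty, and_false, false_or, iff_false]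
        omega
      · refine Or.inr (Or.inr ⟨Nat.even_iff.mpr (by omega), Or.inl ?_⟩)
        ext i
        rw [hmem i]
        simp only [hz, mem_filter, mem_univ, true_and, and_false, false_or]
        omega
  · rintro (rfl | rfl | ⟨heven, rfl | rfl⟩)
    · refine (negLambda_injective_iff_of_threshold (m := n) (fun i _ => ?_) (by omega)
        le_rfl).mpr ?_
      · simp [i.isLt]
      · simp
    · refine (negLambda_injective_iff_of_threshold (m := 1) (fun i hi => ?_) le_rfl
        (by omega)).mpr ?_
      · simp only [mem_univ, true_iff]
        exact Nat.one_le_iff_ne_zero.mpr (hval i hi)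
      · simp
    · have h2 := Nat.even_iff.mp heven
      refine (negLambda_injective_iff_of_threshold (m := n / 2) (fun i hi => ?_) (by omega)
        (by omega)).mpr ?_
      · simp
      · simp only [mem_filter, mem_univ, true_and, Fin.val_zero, if_neg (by omega : ¬n / 2 ≤ 0)]
        omega
    · have h2 := Nat.even_iff.mp heven
      refine (negLambda_injective_iff_of_threshold (m := n / 2 + 1) (fun i hi => ?_)
        (by omega) (by omega)).mpr ?_
      · simp [hi]
      · simp only [mem_filter, mem_univ, true_and, Fin.val_zero, true_or, if_true]
        omega

theorem negLambda_filter_comp_swap (heven : Even n) {w : Fin n} (hw : (w : ℕ) = n / 2) :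
    negLambda (univ.filter fun i : Fin n => i.val = 0 ∨ n / 2 + 1 ≤ i.val) =
      negLambda (univ.filter fun i : Fin n => n / 2 ≤ i.val) ∘ Equiv.swap 0 w := by
  have h2 := Nat.even_iff.mp heven
  have hn := NeZero.ne n
  have hw0 : w ≠ 0 := Fin.val_ne_zero_iff.mp (by omega)
  have hA₀ : ∀ i : Fin n, i ≠ 0 →
      (i ∈ univ.filter (fun i : Fin n => n / 2 ≤ i.val) ↔ n / 2 ≤ i) :=
    fun i _ => by simp
  have hA₁ : ∀ i : Fin n, i ≠ 0 →
      (i ∈ univ.filter (fun i : Fin n => i.val = 0 ∨ n / 2 + 1 ≤ i.val) ↔ n / 2 + 1 ≤ i) :=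
    fun i hi => by simp [hi]
  have hz₀ : (0 : Fin n) ∉ univ.filter (fun i : Fin n => n / 2 ≤ i.val) := by simp; omega
  have hz₁ : (0 : Fin n) ∈ univ.filter (fun i : Fin n => i.val = 0 ∨ n / 2 + 1 ≤ i.val) := by simp
  funext j
  rw [Function.comp_apply]
  rcases eq_or_ne j 0 with rfl | hj0
  · rw [Equiv.swap_apply_left, negLambda_zero_of_threshold hA₁ (by omega),
      negLambda_of_threshold hA₀ hw0, if_pos hz₁, if_pos hw.ge]
    omega
  rcases eq_or_ne j w with rfl | hjw
  · rw [Equiv.swap_apply_right, negLambda_of_threshold hA₁ hw0,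
      negLambda_zero_of_threshold hA₀ (by omega), if_neg hz₀, if_neg (by omega)]
    omega
  · rw [Equiv.swap_apply_of_ne_of_ne hj0 hjw, negLambda_of_threshold hA₁ hj0,
      negLambda_of_threshold hA₀ hj0]
    have : (j : ℕ) ≠ n / 2 := fun h => hjw (Fin.ext (h.trans hw.symm))
    split_ifs <;> omega

theorem card_filter_zero_or_half_lt :
    #(univ.filter fun i : Fin n => i.val = 0 ∨ n / 2 + 1 ≤ i.val) =
      #(univ.filter fun i : Fin n => n / 2 ≤ i.val) := by
  have hn := NeZero.ne n
  rw [card_eq_of_threshold (m := n / 2 + 1) (fun i hi => by simp [hi]) (by omega),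
    if_pos (by simp), Fin.card_filter_le_val]
  omega

end ThickRegular

theorem Equiv.Perm.sum_sign_smul_comp_swap {α β R M : Type*} [Fintype α] [DecidableEq α]
    [Ring R] [AddCommGroup M] [Module R M] (f : (α → β) → M) (μ : α → β) {i j : α}
    (hij : i ≠ j) :
    ∑ w : Perm α, ((sign w : ℤ) : R) • f ((μ ∘ swap i j) ∘ w.symm) =
      -∑ w : Perm α, ((sign w : ℤ) : R) • f (μ ∘ w.symm) := by
  rw [← Finset.sum_neg_distrib]
  refine Fintype.sum_equiv (Equiv.mulRight (swap i j)) _ _ fun w => ?_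
  have hsymm : ⇑(w * swap i j).symm = swap i j ∘ w.symm := by
    rw [← Perm.inv_def, mul_inv_rev, swap_inv, Perm.coe_mul, Perm.inv_def]
  simp [sign_mul, sign_swap hij, hsymm, Function.comp_assoc]

open ThickRegular in
/-- Expansion `e^{ρ_{n−1}} ∏_{i=1}^n (1 − e^{−ε_1−ε_i}) = Σ_{A⊆{1,…,n}} (−1)^{|A|} e^{λ_A}`
with `λ_A = ρ_{n−1} − Σ_{i∈A}(ε_1+ε_i)`, together with:
(a) if `n` is odd, `λ_A` is regular only for `A = ∅` and `A = {1,…,n}`;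
(b) if `n` is even, the regular `λ_A` are exactly those for `A = ∅`, `A = {1,…,n}`,
`A₀ = {n/2+1,…,n}` and `A₁ = {1} ∪ {n/2+2,…,n}`; moreover `λ_{A₀}` and `λ_{A₁}`
differ by a transposition of coordinates, so their signed contributions to
`Σ_w sgn(w) e^{w(·)}` cancel. -/
theorem thick_regular_terms (n : ℕ) (hn : 2 ≤ n)
    (e : (Fin n → ℤ) → AddMonoidAlgebra ℚ (Fin n → ℤ))
    (he : ∀ v, e v = AddMonoidAlgebra.single v 1)
    (F : (Fin n → ℤ) → AddMonoidAlgebra ℚ (Fin n → ℤ))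
    (hF : ∀ μ, F μ = ∑ w : Equiv.Perm (Fin n), ((Equiv.Perm.sign w : ℤ) : ℚ) • e (μ ∘ w.symm))
    (ρn1 : Fin n → ℤ) (hρn1 : ρn1 = fun i => -(i.val : ℤ))
    (lam : Finset (Fin n) → (Fin n → ℤ))
    (hlam : ∀ A, lam A =
      ρn1 - ∑ i ∈ A, (Pi.single (⟨0, by omega⟩ : Fin n) (1 : ℤ) + Pi.single i 1))
    (A₀ A₁ : Finset (Fin n))
    (hA₀ : A₀ = univ.filter (fun i : Fin n => n / 2 ≤ i.val))
    (hA₁ : A₁ = univ.filter (fun i : Fin n => i.val = 0 ∨ n / 2 + 1 ≤ i.val)) :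
    (e ρn1 * ∏ i : Fin n,
        (1 - e (-(Pi.single (⟨0, by omega⟩ : Fin n) 1 + Pi.single i 1)))
      = ∑ A : Finset (Fin n), ((-1 : ℚ) ^ A.card) • e (lam A)) ∧
    (Odd n → ∀ A : Finset (Fin n), Function.Injective (lam A) → A = ∅ ∨ A = univ) ∧
    (Even n →
      (∀ A : Finset (Fin n),
        Function.Injective (lam A) ↔ (A = ∅ ∨ A = univ ∨ A = A₀ ∨ A = A₁)) ∧
      (∃ i j : Fin n, i ≠ j ∧ lam A₁ = lam A₀ ∘ (Equiv.swap i j)) ∧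
      ((-1 : ℚ) ^ A₀.card • F (lam A₀) + (-1 : ℚ) ^ A₁.card • F (lam A₁) = 0)) := by
  have : NeZero n := ⟨by omega⟩
  have hlam_eq : ∀ A, lam A = fun j => -(negLambda A j : ℤ) := fun A => by
    funext j
    rw [hlam, hρn1, Pi.sub_sum_single_add_single_apply, negLambda, Fin.mk_zero']
    push_cast
    ring
  have hinj : ∀ A, Function.Injective (lam A) ↔ Function.Injective (negLambda A) := fun A => by
    rw [hlam_eq A]
    exact (neg_injective.comp Nat.cast_injective).of_comp_iff _
  subst hA₀ hA₁
  obtain ⟨w, hw⟩ : ∃ w : Fin n, (w : ℕ) = n / 2 := ⟨⟨n / 2, by omega⟩, rfl⟩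
  have hw0 : (0 : Fin n) ≠ w := by
    rw [Ne, Fin.ext_iff, hw, Fin.val_zero]
    omega
  refine ⟨?_, fun hodd A h => ?_, fun heven => ?_⟩
  · simp only [he]
    rw [AddMonoidAlgebra.single_mul_prod_one_sub_single, powerset_univ]
    simp only [hlam]
  · obtain h | h | ⟨heven, -⟩ := (negLambda_injective_iff A).mp ((hinj A).mp h)
    exacts [Or.inl h, Or.inr h, absurd heven (Nat.not_even_iff_odd.mpr hodd)]
  · have hswap : lam (univ.filter fun i : Fin n => i.val = 0 ∨ n / 2 + 1 ≤ i.val) =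
        lam (univ.filter fun i : Fin n => n / 2 ≤ i.val) ∘ Equiv.swap 0 w := by
      rw [hlam_eq, hlam_eq, negLambda_filter_comp_swap heven hw]
      rfl
    refine ⟨fun A => ?_, ⟨0, w, hw0, hswap⟩, ?_⟩
    · rw [hinj, negLambda_injective_iff]
      simp only [heven, true_and]
    · rw [hF, hF, hswap, Equiv.Perm.sum_sign_smul_comp_swap e _ hw0,
        card_filter_zero_or_half_lt, smul_neg, add_neg_cancel]
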